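/- The modified Laguerre polynomials l_n^(α) satisfy the Appell property: d/dx l_n^(α)(x) = n·l_{n−1}^(α)(x) for all n ≥ 1. -/
import Mathlib


open Polynomial

/-- Modified Laguerre polynomials, defined by `l_0 = 1`, `l_1 = x + α`,
`l_n = (x+α-n+1) l_{n-1} + x(n-1) l_{n-2}`. -/
noncomputable def lm (α : ℝ) : ℕ → Polynomial ℝ
  | 0 => 1
  | 1 => X + C α
  | (n + 2) =>
      (X + C (α - ((n : ℝ) + 2) + 1)) * lm α (n + 1) + X * C ((n : ℝ) + 1) * lm α n

theorem stmt2 (α : ℝ) (n : ℕ) (hn : 1 ≤ n) :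
    derivative (lm α n) = C (n : ℝ) * lm α (n - 1) := by
  induction n using Nat.strong_induction_on with
  | _ n ih =>
    match n, hn with
    | 1, _ => simp [lm]
    | 2, _ =>
      show derivative (lm α 2) = C ((2:ℕ) : ℝ) * lm α 1
      simp only [lm]
      rw [derivative_add, derivative_mul, derivative_mul, derivative_add,
        derivative_X, derivative_C, derivative_mul, derivative_X, derivative_C]
      push_cast
      ring_nf
      simp [lm, map_ofNat]
      ring
    | (m + 3), _ =>
      have h1 : derivative (lm α (m + 2)) = C ((m + 2 : ℕ) : ℝ) * lm α (m + 1) :=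
        ih (m + 2) (by omega) (by omega)
      have h2 : derivative (lm α (m + 1)) = C ((m + 1 : ℕ) : ℝ) * lm α m :=
        ih (m + 1) (by omega) (by omega)
      show derivative (lm α (m + 3)) = C ((m + 3 : ℕ) : ℝ) * lm α (m + 2)
      have hrec : lm α (m + 3) =
          (X + C (α - (((m : ℝ) + 1) + 2) + 1)) * lm α (m + 2)
            + X * C (((m : ℝ) + 1) + 1) * lm α (m + 1) := by
        show lm α ((m + 1) + 2) = _
        rw [lm]
        push_cast
        ring_nf
      have hrec2 : lm α (m + 2) =
          (X + C (α - ((m : ℝ) + 2) + 1)) * lm α (m + 1) + X * C ((m : ℝ) + 1) * lm α m := by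
        rw [lm]
      rw [hrec]
      simp only [derivative_add, derivative_mul, derivative_X, derivative_C]
      rw [h1, h2, hrec2]
      push_cast
      simp only [C_add, C_sub, C_neg, C_mul, map_ofNat, map_one, map_natCast]
      ring
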